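/- arXiv:2208.08262 — 7 statements merged into one kernel-verified Lean document; each statement's English description precedes it below -/
import Mathlib

section
/- Let G be a topological group and let U be a neighborhood of the identity element 1 such that U = U⁻¹ and (x·y)·(x·y) = 1 for all x, y ∈ U. Then the subgroup ⟨U⟩ generated by U is open (hence clopen) in G, is abelian, and every element h ∈ ⟨U⟩ satisfies h·h = 1; that is, ⟨U⟩ is an open Boolean subgroup of G. -/
/-! Taking `y = 1` shows that every element of `U` is an involution, and then
`x * y = (x * y)⁻¹ = y⁻¹ * x⁻¹ = y * x`. So `U` consists of pairwise commuting involutions,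
which generate a Boolean group; it is open because it contains the neighbourhood `U` of `1`. -/

open Set Topology Pointwise

universe u v w

/-- A cozero set: the set where some continuous real-valued function is nonzero. -/
def IsCozeroSet {X : Type u} [TopologicalSpace X] (s : Set X) : Prop :=
  ∃ f : X → ℝ, Continuous f ∧ s = {x | f x ≠ 0}

/-- An F-space: any two disjoint cozero sets are completely separated. -/
def IsFSpace (X : Type u) [TopologicalSpace X] : Prop :=
  ∀ s t : Set X, IsCozeroSet s → IsCozeroSet t → Disjoint s t →
    ∃ g : X → ℝ, Continuous g ∧ (∀ x, g x ∈ Set.Icc (0 : ℝ) 1) ∧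
      (∀ x ∈ s, g x = 0) ∧ (∀ x ∈ t, g x = 1)

/-- An F'-space: any two disjoint cozero sets have disjoint closures. -/
def IsFPrimeSpace (X : Type u) [TopologicalSpace X] : Prop :=
  ∀ s t : Set X, IsCozeroSet s → IsCozeroSet t → Disjoint s t →
    Disjoint (closure s) (closure t)

/-- A basically disconnected space: the closure of every cozero set is open. -/
def IsBasicallyDisconnected (X : Type u) [TopologicalSpace X] : Prop :=
  ∀ s : Set X, IsCozeroSet s → IsOpen (closure s)

/-- A P-space: every Gδ set is open. -/
def IsPSpace (X : Type u) [TopologicalSpace X] : Prop :=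
  ∀ s : Set X, IsGδ s → IsOpen s

/-- Covering dimension at most `n`: every finite open cover has a finite open
refinement in which every point belongs to at most `n + 1` members. -/
def CovDimLE (X : Type u) [TopologicalSpace X] (n : ℕ) : Prop :=
  ∀ 𝒰 : Finset (Set X), (∀ U ∈ 𝒰, IsOpen U) → ⋃₀ (𝒰 : Set (Set X)) = Set.univ →
    ∃ 𝒱 : Finset (Set X), (∀ V ∈ 𝒱, IsOpen V) ∧ ⋃₀ (𝒱 : Set (Set X)) = Set.univ ∧
      (∀ V ∈ 𝒱, ∃ U ∈ 𝒰, V ⊆ U) ∧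
      ∀ x : X, {V : Set X | V ∈ 𝒱 ∧ x ∈ V}.ncard ≤ n + 1

/-- An ℝ-quotient map: a continuous surjection such that a real-valued function on the
target is continuous whenever its composition with the map is continuous. -/
def IsRQuotientMap {X : Type u} {Y : Type v} [TopologicalSpace X] [TopologicalSpace Y]
    (p : X → Y) : Prop :=
  Continuous p ∧ Function.Surjective p ∧ ∀ φ : Y → ℝ, Continuous (φ ∘ p) → Continuous φ

/-- A non-P-point: a point having a Gδ set around it which is not a neighborhood of it. -/
def IsNonPPoint {X : Type u} [TopologicalSpace X] (x : X) : Prop :=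
  ∃ s : Set X, IsGδ s ∧ x ∈ s ∧ s ∉ nhds x

theorem commute_of_mul_self_eq_one {G : Type*} [Group G] {x y : G} (hx : x * x = 1)
    (hy : y * y = 1) (hxy : (x * y) * (x * y) = 1) : x * y = y * x :=
  calc x * y = (x * y)⁻¹ := (inv_eq_of_mul_eq_one_right hxy).symm
    _ = y * x := by
      rw [mul_inv_rev, inv_eq_of_mul_eq_one_right hx, inv_eq_of_mul_eq_one_right hy]

theorem Subgroup.mul_self_eq_one_of_mem_closure {G : Type*} [Group G] {s : Set G}
    (hcomm : ∀ x ∈ s, ∀ y ∈ s, x * y = y * x) (hs : ∀ x ∈ s, x * x = 1) {g : G}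
    (hg : g ∈ closure s) : g * g = 1 := by
  have := isMulCommutative_closure hcomm
  induction hg using closure_induction with
  | mem x hx => exact hs x hx
  | one => exact mul_one 1
  | mul x y hx hy hx2 hy2 =>
    rw [Commute.mul_mul_mul_comm (setLike_mul_comm hy hx), hx2, hy2, mul_one]
  | inv x _ hx2 => rw [← mul_inv_rev, hx2, inv_one]

theorem statement1_general {G : Type u} [Group G] [TopologicalSpace G] [IsTopologicalGroup G]
    (U : Set G) (hU : U ∈ nhds (1 : G))
    (hsq : ∀ x ∈ U, ∀ y ∈ U, (x * y) * (x * y) = 1) :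
    IsOpen ((Subgroup.closure U : Subgroup G) : Set G) ∧
    IsClosed ((Subgroup.closure U : Subgroup G) : Set G) ∧
    (∀ a ∈ Subgroup.closure U, ∀ b ∈ Subgroup.closure U, a * b = b * a) ∧
    (∀ h ∈ Subgroup.closure U, h * h = 1) := by
  have hsq_self : ∀ x ∈ U, x * x = 1 := fun x hx => by
    simpa using hsq x hx 1 (mem_of_mem_nhds hU)
  have hcomm : ∀ x ∈ U, ∀ y ∈ U, x * y = y * x := fun x hx y hy =>
    commute_of_mul_self_eq_one (hsq_self x hx) (hsq_self y hy) (hsq x hx y hy)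
  have hopen : IsOpen ((Subgroup.closure U : Subgroup G) : Set G) :=
    Subgroup.isOpen_of_mem_nhds _ (Filter.mem_of_superset hU Subgroup.subset_closure)
  have := Subgroup.isMulCommutative_closure hcomm
  exact ⟨hopen, Subgroup.isClosed_of_isOpen _ hopen,
    fun _ ha _ hb => setLike_mul_comm ha hb,
    fun h hh => Subgroup.mul_self_eq_one_of_mem_closure hcomm hsq_self hh⟩

/-- If `U` is a symmetric neighborhood of the identity such that `(x * y) ^ 2 = 1` for all
`x, y ∈ U`, then the subgroup generated by `U` is open (hence clopen), abelian, and Boolean. -/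
theorem statement1 {G : Type u} [Group G] [TopologicalSpace G] [IsTopologicalGroup G]
    (U : Set G) (hU : U ∈ nhds (1 : G)) (hsymm : U⁻¹ = U)
    (hsq : ∀ x ∈ U, ∀ y ∈ U, (x * y) * (x * y) = 1) :
    IsOpen ((Subgroup.closure U : Subgroup G) : Set G) ∧
    IsClosed ((Subgroup.closure U : Subgroup G) : Set G) ∧
    (∀ a ∈ Subgroup.closure U, ∀ b ∈ Subgroup.closure U, a * b = b * a) ∧
    (∀ h ∈ Subgroup.closure U, h * h = 1) :=
  statement1_general U hU hsq
end

section
/- Let G be a Hausdorff topological group whose underlying Tychonoff space is Lindelöf and basically disconnected. Then either G is a P-space, or there exists a closed normal subgroup N of G such that the quotient topological group G/N is nondiscrete, has countable pseudocharacter, is basically disconnected, and contains an open Boolean subgroup whose underlying space is basically disconnected. -/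
open Set Topology Pointwise

universe u v w

/-- The properties of the quotient group `G ⧸ N` asserted in the theorem: it is nondiscrete,
of countable pseudocharacter, basically disconnected, and contains an open Boolean subgroup
whose underlying space is basically disconnected. -/
def QuotientIsGood {G : Type u} [Group G] [TopologicalSpace G] (N : Subgroup G)
    [N.Normal] : Prop :=
  ¬ DiscreteTopology (G ⧸ N) ∧ IsGδ ({1} : Set (G ⧸ N)) ∧
  IsBasicallyDisconnected (G ⧸ N) ∧
  ∃ H : Subgroup (G ⧸ N), IsOpen (H : Set (G ⧸ N)) ∧ (∀ h ∈ H, h * h = 1) ∧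
    IsBasicallyDisconnected ↥H

/-!
If `G` is not a P-space, some Gδ set `⋂ Uₙ` around `1` is not a neighbourhood of `1`. Lindelöf
groups are ω-narrow, so the `Uₙ` can be enlarged to a countable family of open neighbourhoods of
`1` closed under inverses, "square roots" `W * W ⊆ V` and conjugation; its intersection `N` is a
closed normal subgroup with `N ⊆ ⋂ Uₙ`, so `G ⧸ N` is nondiscrete, and `{1}` is a Gδ in `G ⧸ N`.
Basic disconnectedness passes to the open image `G ⧸ N`.

The heart of the matter: in a Lindelöf basically disconnected group `Q` with `{1}` a Gδ, the
elements with `x * x = 1` form a neighbourhood of `1`. Otherwise `1` lies in the closure of the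
cozero set `D = {x | x * x ≠ 1}`, which is Lindelöf. Covering it by cozero sets disjoint from
their inverses and disjointifying their clopen closures splits `D` into countably many cozero
pieces `Wₙ` with `Wₙ ∩ Wₙ⁻¹ = ∅`; collecting the `x` whose piece precedes that of `x⁻¹` gives a
cozero set `S` with `D ⊆ S ∪ S⁻¹` and `S ∩ S⁻¹ = ∅`. In a basically disconnected space disjoint
cozero sets have disjoint closures, yet `1 ∈ closure S = (closure S⁻¹)⁻¹`. Finally, an open
`V ∋ 1` with `V * V ⊆ {x | x * x = 1}` consists of commuting involutions, so it generates an open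
Boolean subgroup, and clopen subspaces inherit basic disconnectedness.
-/

open Function

theorem Set.Countable.exists_superset_closedUnder {α : Type*} {s : Set α} (hs : s.Countable)
    (f : α → Set α) (hf : ∀ a, (f a).Countable) :
    ∃ t : Set α, t.Countable ∧ s ⊆ t ∧ ∀ a ∈ t, f a ⊆ t := by
  let T : ℕ → Set α := fun n => Nat.rec s (fun _ T => ⋃ a ∈ T, f a) n
  have hT : ∀ n, (T n).Countable := by
    intro n
    induction n with
    | zero => exact hs
    | succ n ih => exact ih.biUnion fun a _ => hf a
  refine ⟨⋃ n, T n, countable_iUnion hT, subset_iUnion T 0, fun a ha => ?_⟩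
  obtain ⟨n, hn⟩ := mem_iUnion.1 ha
  exact (subset_biUnion_of_mem hn).trans (subset_iUnion T (n + 1))

section CozeroSets

variable {X Y : Type*} [TopologicalSpace X] [TopologicalSpace Y]

theorem IsCozeroSet.isOpen {s : Set X} (hs : IsCozeroSet s) : IsOpen s := by
  obtain ⟨f, hf, rfl⟩ := hs
  exact isOpen_ne_fun hf continuous_const

theorem IsCozeroSet.preimage {s : Set Y} (hs : IsCozeroSet s) {g : X → Y} (hg : Continuous g) :
    IsCozeroSet (g ⁻¹' s) := by
  obtain ⟨f, hf, rfl⟩ := hs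
  exact ⟨f ∘ g, hf.comp hg, rfl⟩

theorem IsCozeroSet.inv {G : Type*} [TopologicalSpace G] [Inv G] [ContinuousInv G] {s : Set G}
    (hs : IsCozeroSet s) : IsCozeroSet s⁻¹ :=
  hs.preimage continuous_inv

theorem IsCozeroSet.inter {s t : Set X} (hs : IsCozeroSet s) (ht : IsCozeroSet t) :
    IsCozeroSet (s ∩ t) := by
  obtain ⟨f, hf, rfl⟩ := hs
  obtain ⟨g, hg, rfl⟩ := ht
  exact ⟨f * g, hf.mul hg, by ext x; simp⟩

theorem IsClopen.isCozeroSet {s : Set X} (hs : IsClopen s) : IsCozeroSet s :=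
  ⟨s.indicator 1, hs.continuous_indicator continuous_const, by
    ext x; by_cases hx : x ∈ s <;> simp [hx]⟩

theorem isCozeroSet_iUnion {s : ℕ → Set X} (hs : ∀ n, IsCozeroSet (s n)) :
    IsCozeroSet (⋃ n, s n) := by
  choose f hf hfs using hs
  set g : ℕ → X → ℝ := fun n x => (1 / 2) ^ n * min |f n x| 1 with hg
  have hg_nonneg : ∀ n x, 0 ≤ g n x := fun n x => by positivity
  have hg_le : ∀ n x, g n x ≤ (1 / 2) ^ n := fun n x =>
    mul_le_of_le_one_right (by positivity) (min_le_right _ _)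
  refine ⟨fun x => ∑' n, g n x, continuous_tsum (fun n => by fun_prop) summable_geometric_two
    fun n x => by rw [Real.norm_of_nonneg (hg_nonneg n x)]; exact hg_le n x, ?_⟩
  ext x
  simp only [hfs, mem_iUnion, mem_ofPred_eq]
  constructor
  · rintro ⟨n, hn⟩
    refine (Summable.tsum_pos ?_ (hg_nonneg · x) n ?_).ne'
    · exact summable_geometric_two.of_nonneg_of_le (hg_nonneg · x) (hg_le · x)
    · exact mul_pos (by positivity) (lt_min (abs_pos.2 hn) one_pos)
  · contrapose!
    intro h
    simp [hg, h]

theorem IsCozeroSet.isLindelof [LindelofSpace X] {s : Set X} (hs : IsCozeroSet s) :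
    IsLindelof s := by
  obtain ⟨f, hf, rfl⟩ := hs
  have hσ : {x | f x ≠ 0} = ⋃ n : ℕ, {x | 1 / ((n : ℝ) + 1) ≤ |f x|} := by
    ext x
    simp only [mem_ofPred_eq, mem_iUnion]
    refine ⟨fun hx => ?_, fun ⟨n, hn⟩ hx => ?_⟩
    · obtain ⟨n, hn⟩ := exists_nat_one_div_lt (abs_pos.2 hx)
      exact ⟨n, hn.le⟩
    · rw [hx, abs_zero] at hn
      exact (Nat.one_div_pos_of_nat.trans_le hn).false
  rw [hσ]
  exact isLindelof_iUnion fun n => (isClosed_le continuous_const hf.abs).isLindelof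

variable [CompletelyRegularSpace X]

theorem exists_isCozeroSet_mem_subset {U : Set X} (hU : IsOpen U) {x : X} (hx : x ∈ U) :
    ∃ C, IsCozeroSet C ∧ x ∈ C ∧ C ⊆ U := by
  obtain ⟨f, hf, hfx, hf1⟩ := CompletelyRegularSpace.completely_regular_isOpen x U hU hx
  refine ⟨{y | (f y : ℝ) - 1 ≠ 0}, ⟨_, (continuous_subtype_val.comp hf).sub continuous_const, rfl⟩,
    by simp [hfx], fun y hy => ?_⟩
  by_contra hyU
  exact hy (by simp [hf1 hyU])

theorem IsGδ.exists_isCozeroSet_compl_subset {s : Set X} (hs : IsGδ s) {x : X} (hx : x ∈ s) :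
    ∃ C, IsCozeroSet C ∧ sᶜ ⊆ C ∧ x ∉ C := by
  obtain ⟨U, hUo, rfl⟩ := isGδ_iff_eq_iInter_nat.1 hs
  choose f hf hfx hf1 using fun n =>
    CompletelyRegularSpace.completely_regular_isOpen x (U n) (hUo n) (mem_iInter.1 hx n)
  refine ⟨⋃ n, {y | (f n y : ℝ) ≠ 0},
    isCozeroSet_iUnion fun n => ⟨_, continuous_subtype_val.comp (hf n), rfl⟩, ?_, by simp [hfx]⟩
  rw [compl_iInter]
  exact iUnion_mono fun n y hy => by simp [hf1 n hy]

end CozeroSets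

section BasicallyDisconnected

variable {X Y : Type*} [TopologicalSpace X] [TopologicalSpace Y]

theorem IsBasicallyDisconnected.isFPrimeSpace (hX : IsBasicallyDisconnected X) :
    IsFPrimeSpace X := fun _ _ hs ht hst =>
  ((hst.symm.closure_right ht.isOpen).symm).closure_right (hX _ hs)

theorem IsBasicallyDisconnected.of_isOpenMap (hX : IsBasicallyDisconnected X) {f : X → Y}
    (hf : Continuous f) (hfo : IsOpenMap f) (hsurj : Function.Surjective f) :
    IsBasicallyDisconnected Y := by
  intro s hs
  rw [← hsurj.image_preimage (closure s), hfo.preimage_closure_eq_closure_preimage hf]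
  exact hfo _ (hX _ (hs.preimage hf))

theorem IsClopen.isCozeroSet_image_val {A : Set X} (hA : IsClopen A) {s : Set A}
    (hs : IsCozeroSet s) : IsCozeroSet (Subtype.val '' s) := by
  classical
  obtain ⟨f, hf, rfl⟩ := hs
  let F : X → ℝ := fun x => if h : x ∈ A then f ⟨x, h⟩ else 0
  have hF : Continuous F := by
    refine continuous_iff_continuousAt.2 fun x => ?_
    by_cases hx : x ∈ A
    · refine ContinuousOn.continuousAt ?_ (hA.isOpen.mem_nhds hx)
      rw [continuousOn_iff_continuous_domRestrict]
      convert hf using 1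
      ext y
      simp [F, y.2]
    · refine (continuousOn_const (c := (0 : ℝ))).congr (fun y hy => ?_)
        |>.continuousAt (hA.isClosed.isOpen_compl.mem_nhds hx)
      simp [F, show y ∉ A from hy]
  refine ⟨F, hF, ?_⟩
  ext x
  by_cases hx : x ∈ A <;> simp [F, hx]

theorem IsBasicallyDisconnected.subtype (hX : IsBasicallyDisconnected X) {A : Set X}
    (hA : IsClopen A) : IsBasicallyDisconnected A := by
  intro s hs
  rw [Topology.IsInducing.subtypeVal.closure_eq_preimage_closure_image]
  exact (hX _ (hA.isCozeroSet_image_val hs)).preimage continuous_subtype_val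

theorem IsBasicallyDisconnected.exists_disjoint_cozero_refinement
    (hX : IsBasicallyDisconnected X) {D : Set X} (hD : IsCozeroSet D) (hDL : IsLindelof D)
    {ι : Type*} [Nonempty ι] (V : ι → Set X) (hV : ∀ i, IsCozeroSet (V i))
    (hDV : D ⊆ ⋃ i, V i) :
    ∃ W : ℕ → Set X, (∀ n, IsCozeroSet (W n)) ∧ Pairwise (Disjoint on W) ∧ D = ⋃ n, W n ∧
      ∀ n, ∃ i, W n ⊆ closure (V i) := by
  obtain ⟨r, hr⟩ := hDL.indexed_countable_subcover V (fun i => (hV i).isOpen) hDV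
  set O : ℕ → Set X := fun n => closure (V (r n))
  have hO : ∀ n, IsClopen (O n) := fun n => ⟨isClosed_closure, hX _ (hV (r n))⟩
  refine ⟨fun n => D ∩ disjointed O n, fun n => ?_, fun m n hmn => ?_, ?_,
    fun n => ⟨r n, inter_subset_right.trans (disjointed_subset O n)⟩⟩
  · exact hD.inter (disjointedRec (fun t i ht => ht.diff (hO i)) (hO n)).isCozeroSet
  · exact (disjoint_disjointed O hmn).mono inter_subset_right inter_subset_right
  · rw [← inter_iUnion, iUnion_disjointed, eq_comm, inter_eq_left]
    exact hr.trans (iUnion_mono fun n => subset_closure)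

end BasicallyDisconnected

section Involutions

theorem exists_isCozeroSet_mem_disjoint_inv {Q : Type*} [TopologicalSpace Q] [InvolutiveInv Q]
    [ContinuousInv Q] [T2Space Q] [CompletelyRegularSpace Q] {x : Q} (hx : x⁻¹ ≠ x) :
    ∃ V, IsCozeroSet V ∧ x ∈ V ∧ Disjoint V V⁻¹ := by
  obtain ⟨A, B, hA, hB, hxA, hxB, hAB⟩ := t2_separation hx.symm
  obtain ⟨C, hC, hxC, hCAB⟩ :=
    exists_isCozeroSet_mem_subset (hA.inter hB.inv) ⟨hxA, by simpa using hxB⟩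
  refine ⟨C, hC, hxC, hAB.mono (hCAB.trans inter_subset_left) ?_⟩
  exact (inv_subset_inv.2 (hCAB.trans inter_subset_right)).trans (by rw [inv_inv])

variable {α : Type*} [InvolutiveInv α]

def lowerInvPart (W : ℕ → Set α) : Set α :=
  ⋃ n, ⋃ k, W n ∩ (W (n + k + 1))⁻¹

theorem disjoint_lowerInvPart_inv {W : ℕ → Set α} (hW : Pairwise (Disjoint on W)) :
    Disjoint (lowerInvPart W) (lowerInvPart W)⁻¹ := by
  rw [disjoint_left]
  intro x hx hx'
  simp only [lowerInvPart, mem_iUnion, mem_inter_iff, mem_inv, inv_inv] at hx hx'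
  obtain ⟨n, k, hxn, hxk⟩ := hx
  obtain ⟨m, l, hxm, hxl⟩ := hx'
  have h₁ : n = m + l + 1 := hW.eq (not_disjoint_iff.2 ⟨x, hxn, hxl⟩)
  have h₂ : m = n + k + 1 := hW.eq (not_disjoint_iff.2 ⟨x⁻¹, hxm, hxk⟩)
  omega

theorem mem_lowerInvPart_union_inv {W : ℕ → Set α} (hW : ∀ n, Disjoint (W n) (W n)⁻¹)
    {x : α} {m n : ℕ} (hxm : x ∈ W m) (hxn : x⁻¹ ∈ W n) :
    x ∈ lowerInvPart W ∪ (lowerInvPart W)⁻¹ := by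
  have hmn : m ≠ n := by
    rintro rfl
    exact disjoint_left.1 (hW m) hxm hxn
  simp only [lowerInvPart, mem_union, mem_iUnion, mem_inter_iff, mem_inv, inv_inv]
  rcases hmn.lt_or_gt with h | h
  · exact Or.inl ⟨m, n - m - 1, hxm, by rwa [show m + (n - m - 1) + 1 = n by omega]⟩
  · exact Or.inr ⟨n, m - n - 1, hxn, by rwa [show n + (m - n - 1) + 1 = m by omega]⟩

end Involutions

section BooleanSubgroup

variable {Q : Type*} [Group Q]

theorem Subgroup.mul_self_eq_one_of_mem_closure_s3 {k : Set Q}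
    (hcomm : ∀ x ∈ k, ∀ y ∈ k, x * y = y * x) (hk : ∀ x ∈ k, x * x = 1) {x : Q}
    (hx : x ∈ closure k) : x * x = 1 := by
  have := Subgroup.isMulCommutative_closure hcomm
  induction hx using Subgroup.closure_induction with
  | mem x hx => exact hk x hx
  | one => exact one_mul 1
  | mul a b ha hb iha ihb =>
    have hba : Commute b a := setLike_mul_comm hb ha
    rw [hba.mul_mul_mul_comm, iha, ihb, one_mul]
  | inv a _ iha => rw [← mul_inv_rev, iha, inv_one]

variable [TopologicalSpace Q] [IsTopologicalGroup Q]

theorem exists_isOpen_subgroup_forall_mul_self_eq_one (h : {x : Q | x * x = 1} ∈ 𝓝 1) :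
    ∃ H : Subgroup Q, IsOpen (H : Set Q) ∧ ∀ x ∈ H, x * x = 1 := by
  obtain ⟨V, hVo, hV1, hVV⟩ := exists_open_nhds_one_mul_subset h
  have hV : ∀ x ∈ V, x * x = 1 := fun x hx => by simpa using hVV (mul_mem_mul hx hV1)
  have hVcomm : ∀ x ∈ V, ∀ y ∈ V, x * y = y * x := fun x hx y hy =>
    calc x * y = (x * y)⁻¹ := (inv_eq_of_mul_eq_one_right (hVV (mul_mem_mul hx hy))).symm
      _ = y * x := by
        rw [mul_inv_rev, inv_eq_of_mul_eq_one_right (hV x hx), inv_eq_of_mul_eq_one_right (hV y hy)]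
  refine ⟨Subgroup.closure V, ?_, fun x hx => Subgroup.mul_self_eq_one_of_mem_closure_s3 hVcomm hV hx⟩
  exact Subgroup.isOpen_of_mem_nhds _
    (Filter.mem_of_superset (hVo.mem_nhds hV1) Subgroup.subset_closure)

theorem IsBasicallyDisconnected.setOf_mul_self_eq_one_mem_nhds [T2Space Q] [LindelofSpace Q]
    (hQ : IsBasicallyDisconnected Q) (h1 : IsGδ ({1} : Set Q)) :
    {x : Q | x * x = 1} ∈ 𝓝 1 := by
  have : CompletelyRegularSpace Q := by
    let := IsTopologicalGroup.rightUniformSpace Q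
    infer_instance
  set D : Set Q := {x | x * x = 1}ᶜ with hD_def
  have hD : IsCozeroSet D := by
    obtain ⟨C, hC, hC1, h1C⟩ := h1.exists_isCozeroSet_compl_subset rfl
    obtain rfl : C = {1}ᶜ := subset_antisymm (fun x hx => by rintro rfl; exact h1C hx) hC1
    exact hC.preimage (continuous_id.mul continuous_id)
  have hDinv : D⁻¹ = D := by
    ext x
    simp [hD_def, ← mul_inv_rev]
  by_contra hB
  have h1D : (1 : Q) ∈ closure D := by
    rwa [hD_def, closure_compl, mem_compl_iff, mem_interior_iff_mem_nhds]
  have : Nonempty D := (closure_nonempty_iff.1 ⟨1, h1D⟩).to_subtype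
  choose V hV hxV hVinv using fun x : D =>
    exists_isCozeroSet_mem_disjoint_inv fun h => x.2 (mul_eq_one_iff_eq_inv.2 h.symm)
  obtain ⟨W, hWcoz, hWdisj, hDW, hWV⟩ := hQ.exists_disjoint_cozero_refinement hD hD.isLindelof V hV
    fun x hx => mem_iUnion.2 ⟨⟨x, hx⟩, hxV _⟩
  have hWinv : ∀ n, Disjoint (W n) (W n)⁻¹ := fun n => by
    obtain ⟨i, hi⟩ := hWV n
    refine (hQ.isFPrimeSpace _ _ (hV i) (hV i).inv (hVinv i)).mono hi ?_
    rw [← inv_closure]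
    exact inv_subset_inv.2 hi
  set S := lowerInvPart W
  have hS : IsCozeroSet S := isCozeroSet_iUnion fun n => isCozeroSet_iUnion fun k =>
    (hWcoz n).inter (hWcoz _).inv
  have hDS : D ⊆ S ∪ S⁻¹ := fun x hx => by
    have hx' : x⁻¹ ∈ D := by rwa [← hDinv] at hx
    rw [hDW, mem_iUnion] at hx hx'
    obtain ⟨m, hm⟩ := hx
    obtain ⟨n, hn⟩ := hx'
    exact mem_lowerInvPart_union_inv hWinv hm hn
  have h1S : (1 : Q) ∈ closure S := by
    have := closure_mono hDS h1D
    rwa [closure_union, ← inv_closure, mem_union, mem_inv, inv_one, or_self] at this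
  refine disjoint_left.1 (hQ.isFPrimeSpace _ _ hS hS.inv (disjoint_lowerInvPart_inv hWdisj)) h1S ?_
  rwa [← inv_closure, mem_inv, inv_one]

end BooleanSubgroup

section NormalSubgroup

variable {G : Type*} [Group G] [TopologicalSpace G]

structure IsNormalNhdSystem (𝒱 : Set (Set G)) : Prop where
  isOpen : ∀ V ∈ 𝒱, IsOpen V
  one_mem : ∀ V ∈ 𝒱, (1 : G) ∈ V
  inv_mem : ∀ V ∈ 𝒱, V⁻¹ ∈ 𝒱
  exists_mul_subset : ∀ V ∈ 𝒱, ∃ W ∈ 𝒱, W * W ⊆ V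
  exists_conj_subset : ∀ V ∈ 𝒱, ∀ g : G, ∃ W ∈ 𝒱, ∀ x ∈ W, g * x * g⁻¹ ∈ V

namespace IsNormalNhdSystem

variable {𝒱 : Set (Set G)} (h : IsNormalNhdSystem 𝒱)

def subgroup : Subgroup G where
  carrier := ⋂₀ 𝒱
  one_mem' := mem_sInter.2 h.one_mem
  mul_mem' {a b} ha hb := mem_sInter.2 fun V hV => by
    obtain ⟨W, hW, hWV⟩ := h.exists_mul_subset V hV
    exact hWV (mul_mem_mul (ha W hW) (hb W hW))
  inv_mem' {a} ha := mem_sInter.2 fun V hV => ha _ (h.inv_mem V hV)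

theorem subgroup_normal : h.subgroup.Normal where
  conj_mem n hn g := mem_sInter.2 fun V hV => by
    obtain ⟨W, hW, hWV⟩ := h.exists_conj_subset V hV g
    exact hWV n (hn W hW)

theorem isClosed_subgroup [IsTopologicalGroup G] : IsClosed (h.subgroup : Set G) := by
  refine isClosed_of_closure_subset fun x hx => mem_sInter.2 fun V hV => ?_
  obtain ⟨W, hW, hWV⟩ := h.exists_mul_subset V hV
  exact hWV (closure_subset_mul_self_of_mem_nhds_one ((h.isOpen W hW).mem_nhds (h.one_mem W hW))
    (closure_mono (sInter_subset_of_mem hW) hx))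

theorem isGδ_singleton_one [IsTopologicalGroup G] [h.subgroup.Normal] (h𝒱 : 𝒱.Countable) :
    IsGδ ({1} : Set (G ⧸ h.subgroup)) := by
  have h1 : ({1} : Set (G ⧸ h.subgroup)) = ⋂ V ∈ 𝒱, QuotientGroup.mk '' V := by
    refine subset_antisymm (fun _ hq => ?_) fun q hq => ?_
    · rw [mem_singleton_iff.1 hq]
      exact mem_iInter₂.2 fun V hV => ⟨1, h.one_mem V hV, rfl⟩
    obtain ⟨g, rfl⟩ := QuotientGroup.mk_surjective q
    refine (QuotientGroup.eq_one_iff g).2 (mem_sInter.2 fun V hV => ?_)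
    obtain ⟨W, hW, hWV⟩ := h.exists_mul_subset V hV
    obtain ⟨w, hw, hwq⟩ := mem_iInter₂.1 hq W hW
    have hwg : w⁻¹ * g ∈ h.subgroup := QuotientGroup.eq.1 hwq
    simpa using hWV (mul_mem_mul hw (sInter_subset_of_mem hW hwg))
  rw [h1]
  exact .biInter h𝒱 fun V hV => (QuotientGroup.isOpenMap_coe V (h.isOpen V hV)).isGδ

end IsNormalNhdSystem

variable [IsTopologicalGroup G] [LindelofSpace G]

theorem exists_nat_conj_subset {V : Set G} (hV : V ∈ 𝓝 1) :
    ∃ W : ℕ → Set G, (∀ n, IsOpen (W n) ∧ (1 : G) ∈ W n) ∧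
      ∀ g : G, ∃ n, ∀ x ∈ W n, g * x * g⁻¹ ∈ V := by
  have hconj : ∀ g : G, (fun p : G × G => p.1 * p.2 * p.1⁻¹) ⁻¹' V ∈ 𝓝 (g, 1) := fun g =>
    (by fun_prop : Continuous fun p : G × G => p.1 * p.2 * p.1⁻¹).continuousAt.preimage_mem_nhds
      (by simpa using hV)
  choose A W hA hgA hW hW1 hAW using fun g => mem_nhds_prod_iff'.1 (hconj g)
  obtain ⟨r, hr⟩ := isLindelof_univ.indexed_countable_subcover A hA
    fun g _ => mem_iUnion.2 ⟨g, hgA g⟩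
  refine ⟨fun n => W (r n), fun n => ⟨hW _, hW1 _⟩, fun g => ?_⟩
  obtain ⟨n, hn⟩ := mem_iUnion.1 (hr (mem_univ g))
  exact ⟨n, fun x hx => hAW (r n) (mk_mem_prod hn hx)⟩

theorem exists_countable_isNormalNhdSystem {U : ℕ → Set G} (hUo : ∀ n, IsOpen (U n))
    (hU1 : ∀ n, (1 : G) ∈ U n) :
    ∃ 𝒱 : Set (Set G), 𝒱.Countable ∧ IsNormalNhdSystem 𝒱 ∧ ∀ n, U n ∈ 𝒱 := by
  choose sqrt hsqrt using fun V : {V : Set G // IsOpen V ∧ (1 : G) ∈ V} =>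
    exists_open_nhds_one_mul_subset (V.2.1.mem_nhds V.2.2)
  choose conj hconj using fun V : {V : Set G // IsOpen V ∧ (1 : G) ∈ V} =>
    exists_nat_conj_subset (V.2.1.mem_nhds V.2.2)
  let next : Set G → Set (Set G) := fun V =>
    ⋃ hV : IsOpen V ∧ (1 : G) ∈ V, insert (sqrt ⟨V, hV⟩) (insert V⁻¹ (range (conj ⟨V, hV⟩)))
  obtain ⟨t, ht, hUt, hnext⟩ := (countable_range U).exists_superset_closedUnder next
    fun V => countable_iUnion fun _ => ((countable_range _).insert _).insert _
  have hmem : ∀ V ∈ t, ∀ hV : IsOpen V ∧ (1 : G) ∈ V,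
      insert (sqrt ⟨V, hV⟩) (insert V⁻¹ (range (conj ⟨V, hV⟩))) ⊆ t := fun V hVt hV =>
    (subset_iUnion_of_subset hV subset_rfl).trans (hnext V hVt)
  refine ⟨{V ∈ t | IsOpen V ∧ (1 : G) ∈ V}, ht.mono (sep_subset _ _),
    ⟨fun V hV => hV.2.1, fun V hV => hV.2.2, fun V ⟨hVt, hV⟩ => ?_, fun V ⟨hVt, hV⟩ => ?_,
      fun V ⟨hVt, hV⟩ g => ?_⟩, fun n => ⟨hUt (mem_range_self n), hUo n, hU1 n⟩⟩
  · exact ⟨hmem V hVt hV (by simp), hV.1.inv, by simpa using hV.2⟩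
  · obtain ⟨hWo, hW1, hWV⟩ := hsqrt ⟨V, hV⟩
    exact ⟨sqrt ⟨V, hV⟩, ⟨hmem V hVt hV (mem_insert _ _), hWo, hW1⟩, hWV⟩
  · obtain ⟨n, hn⟩ := (hconj ⟨V, hV⟩).2 g
    exact ⟨conj ⟨V, hV⟩ n, ⟨hmem V hVt hV (by simp), (hconj ⟨V, hV⟩).1 n⟩, hn⟩

end NormalSubgroup

theorem exists_iInter_notMem_nhds_one {G : Type*} [Group G] [TopologicalSpace G]
    [IsTopologicalGroup G] (hG : ¬ IsPSpace G) :
    ∃ U : ℕ → Set G, (∀ n, IsOpen (U n)) ∧ (∀ n, (1 : G) ∈ U n) ∧ ⋂ n, U n ∉ 𝓝 1 := by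
  simp only [IsPSpace, not_forall, isOpen_iff_mem_nhds, exists_prop] at hG
  obtain ⟨s, hs, x, hxs, hx⟩ := hG
  obtain ⟨M, hMo, rfl⟩ := isGδ_iff_eq_iInter_nat.1 hs
  refine ⟨fun n => (x * ·) ⁻¹' M n, fun n => (hMo n).preimage (continuous_const_mul x),
    fun n => by simpa using mem_iInter.1 hxs n, ?_⟩
  rwa [← preimage_iInter, ← Filter.mem_map, map_mul_left_nhds_one]

theorem statement3_general {G : Type u} [Group G] [TopologicalSpace G] [IsTopologicalGroup G]
    [LindelofSpace G]
    (hbd : IsBasicallyDisconnected G) :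
    IsPSpace G ∨
      ∃ (N : Subgroup G) (hN : N.Normal), IsClosed (N : Set G) ∧
        @QuotientIsGood G _ _ N hN := by
  refine or_iff_not_imp_left.2 fun hP => ?_
  obtain ⟨U, hUo, hU1, hU⟩ := exists_iInter_notMem_nhds_one hP
  obtain ⟨𝒱, h𝒱c, h𝒱, hU𝒱⟩ := exists_countable_isNormalNhdSystem hUo hU1
  set N := h𝒱.subgroup
  have hN : N.Normal := h𝒱.subgroup_normal
  have hNc : IsClosed (N : Set G) := h𝒱.isClosed_subgroup
  have : LindelofSpace (G ⧸ N) := inferInstanceAs (LindelofSpace (Quotient _))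
  have hGδ : IsGδ ({1} : Set (G ⧸ N)) := h𝒱.isGδ_singleton_one h𝒱c
  have hbdQ : IsBasicallyDisconnected (G ⧸ N) :=
    hbd.of_isOpenMap continuous_quotient_mk' QuotientGroup.isOpenMap_coe
      QuotientGroup.mk_surjective
  obtain ⟨H, hHo, hH⟩ :=
    exists_isOpen_subgroup_forall_mul_self_eq_one (hbdQ.setOf_mul_self_eq_one_mem_nhds hGδ)
  refine ⟨N, hN, hNc, ?_⟩
  refine ⟨?_, hGδ, hbdQ, H, hHo, hH, hbdQ.subtype ⟨H.isClosed_of_isOpen hHo, hHo⟩⟩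
  rw [QuotientGroup.discreteTopology_iff]
  exact fun hNo => hU (Filter.mem_of_superset (hNo.mem_nhds N.one_mem)
    (subset_iInter fun n => sInter_subset_of_mem (hU𝒱 n)))

/-- Any Lindelöf basically disconnected Hausdorff topological group (on a Tychonoff space)
either is a P-space or has a closed normal subgroup `N` such that `G ⧸ N` is a nondiscrete
basically disconnected group of countable pseudocharacter containing an open basically
disconnected Boolean subgroup. -/
theorem statement3 {G : Type u} [Group G] [TopologicalSpace G] [IsTopologicalGroup G]
    [T2Space G] [CompletelyRegularSpace G] [LindelofSpace G]
    (hbd : IsBasicallyDisconnected G) :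
    IsPSpace G ∨
      ∃ (N : Subgroup G) (hN : N.Normal), IsClosed (N : Set G) ∧
        @QuotientIsGood G _ _ N hN :=
  statement3_general hbd
end

section
/- Let G be a Hausdorff topological group whose underlying space is not a P-space. Then G contains a subgroup H that is closed in G, nowhere dense in G, and a Gδ set in G; moreover H can be chosen of the form H = ⋂_{n∈ω} U_n where each U_n is a neighborhood of the identity with U_n = U_n⁻¹ and U_{n+1}·U_{n+1} ⊆ U_n for all n. -/
/-!
Since `G` is not a P-space, some Gδ set `S = ⋂ₙ Wₙ` containing `1` (after a translation) is not
a neighbourhood of `1`. Shrinking recursively, choose open symmetric neighbourhoods `Uₙ ⊆ Wₙ` of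
`1` with `Uₙ₊₁ Uₙ₊₁ ⊆ Uₙ`. Their intersection `H` is a subgroup; it is closed because
`closure Uₙ₊₁ ⊆ Uₙ₊₁ Uₙ₊₁ ⊆ Uₙ`, and it is a Gδ set. A subgroup with nonempty interior is open,
so `H` would be a neighbourhood of `1` contained in `S`; hence `H` is nowhere dense.
-/

open Set Topology Pointwise

universe u v w

section Group

variable {G : Type*} [Group G]

def Subgroup.iInterOfMulSubset (U : ℕ → Set G) (one_mem : ∀ n, (1 : G) ∈ U n)
    (inv_eq : ∀ n, (U n)⁻¹ = U n) (mul_subset : ∀ n, U (n + 1) * U (n + 1) ⊆ U n) :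
    Subgroup G where
  carrier := ⋂ n, U n
  one_mem' := mem_iInter.2 one_mem
  mul_mem' {a b} ha hb := mem_iInter.2 fun n =>
    mul_subset n (mul_mem_mul (mem_iInter.1 ha (n + 1)) (mem_iInter.1 hb (n + 1)))
  inv_mem' {a} ha := mem_iInter.2 fun n => by
    rw [← inv_eq n]
    exact inv_mem_inv.2 (mem_iInter.1 ha n)

@[simp]
theorem Subgroup.coe_iInterOfMulSubset (U : ℕ → Set G) (one_mem : ∀ n, (1 : G) ∈ U n)
    (inv_eq : ∀ n, (U n)⁻¹ = U n) (mul_subset : ∀ n, U (n + 1) * U (n + 1) ⊆ U n) :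
    (iInterOfMulSubset U one_mem inv_eq mul_subset : Set G) = ⋂ n, U n :=
  rfl

end Group

section TopologicalGroup

variable {G : Type*} [Group G] [TopologicalSpace G] [IsTopologicalGroup G]

theorem exists_isGδ_one_mem_notMem_nhds_one (hG : ¬ IsPSpace G) :
    ∃ S : Set G, IsGδ S ∧ (1 : G) ∈ S ∧ S ∉ 𝓝 1 := by
  obtain ⟨s, hsδ, hs⟩ : ∃ s : Set G, IsGδ s ∧ ¬ IsOpen s := by
    simpa [IsPSpace] using hG
  obtain ⟨x, hxs, hsx⟩ : ∃ x ∈ s, s ∉ 𝓝 x := by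
    simpa [isOpen_iff_mem_nhds] using hs
  refine ⟨(x * ·) ⁻¹' s, hsδ.preimage (continuous_const_mul x), by simpa using hxs, ?_⟩
  rwa [← Filter.mem_map, map_mul_left_nhds_one]

theorem exists_isOpen_one_mem_inv_eq_mul_subset {A : Set G} (hA : A ∈ 𝓝 1) :
    ∃ C : Set G, IsOpen C ∧ (1 : G) ∈ C ∧ C⁻¹ = C ∧ C * C ⊆ A := by
  obtain ⟨D, hDo, hD1, hDA⟩ := exists_open_nhds_one_mul_subset hA
  refine ⟨D ∩ D⁻¹, hDo.inter hDo.inv, ⟨hD1, by simpa using hD1⟩, ?_, ?_⟩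
  · rw [inter_inv, inv_inv, inter_comm]
  · exact (mul_subset_mul inter_subset_left inter_subset_left).trans hDA

theorem exists_seq_isOpen_inv_eq_mul_subset {W : ℕ → Set G} (hW : ∀ n, W n ∈ 𝓝 1) :
    ∃ U : ℕ → Set G, (∀ n, IsOpen (U n)) ∧ (∀ n, (1 : G) ∈ U n) ∧ (∀ n, (U n)⁻¹ = U n) ∧
      (∀ n, U (n + 1) * U (n + 1) ⊆ U n) ∧ ∀ n, U n ⊆ W n := by
  choose! step hstepo hstep1 hstepinv hstepmul using
    fun (A : Set G) (hA : A ∈ 𝓝 1) => exists_isOpen_one_mem_inv_eq_mul_subset hA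
  have step_subset {A : Set G} (hA : A ∈ 𝓝 1) : step A ⊆ A := fun g hg =>
    hstepmul A hA (mul_one g ▸ mul_mem_mul hg (hstep1 A hA))
  let A : ℕ → Set G := fun n => Nat.rec (W 0) (fun n B => step B ∩ W (n + 1)) n
  have hA : ∀ n, A n ∈ 𝓝 1 := by
    intro n
    induction n with
    | zero => exact hW 0
    | succ n ih => exact Filter.inter_mem ((hstepo _ ih).mem_nhds (hstep1 _ ih)) (hW (n + 1))
  have hAW : ∀ n, A n ⊆ W n := by
    rintro (_ | n)
    exacts [subset_rfl, inter_subset_right]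
  exact ⟨fun n => step (A n), fun n => hstepo _ (hA n), fun n => hstep1 _ (hA n),
    fun n => hstepinv _ (hA n), fun n => (hstepmul _ (hA (n + 1))).trans inter_subset_left,
    fun n => (step_subset (hA n)).trans (hAW n)⟩

theorem Subgroup.isClosed_iInterOfMulSubset {U : ℕ → Set G} (hU : ∀ n, U n ∈ 𝓝 1)
    (inv_eq : ∀ n, (U n)⁻¹ = U n) (mul_subset : ∀ n, U (n + 1) * U (n + 1) ⊆ U n) :
    IsClosed (iInterOfMulSubset U (fun n => mem_of_mem_nhds (hU n)) inv_eq mul_subset :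
      Set G) := by
  rw [coe_iInterOfMulSubset]
  refine isClosed_of_closure_subset fun g hg => mem_iInter.2 fun n => mul_subset n ?_
  exact closure_subset_mul_self_of_mem_nhds_one (hU (n + 1))
    (_root_.closure_mono (iInter_subset U (n + 1)) hg)

theorem Subgroup.interior_eq_empty_of_subset_notMem_nhds_one {H : Subgroup G} {S : Set G}
    (hHS : (H : Set G) ⊆ S) (hS : S ∉ 𝓝 1) : interior (H : Set G) = ∅ := by
  by_contra hne
  obtain ⟨g, hg⟩ := nonempty_iff_ne_empty.2 hne
  have hHopen : IsOpen (H : Set G) := H.isOpen_of_mem_nhds (mem_interior_iff_mem_nhds.1 hg)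
  exact hS (Filter.mem_of_superset (hHopen.mem_nhds H.one_mem) hHS)

end TopologicalGroup

theorem statement5_general {G : Type u} [Group G] [TopologicalSpace G] [IsTopologicalGroup G]
    (hG : ¬ IsPSpace G) :
    ∃ U : ℕ → Set G, (∀ n, U n ∈ nhds (1 : G)) ∧ (∀ n, (U n)⁻¹ = U n) ∧
      (∀ n, U (n + 1) * U (n + 1) ⊆ U n) ∧
      ∃ H : Subgroup G, (H : Set G) = ⋂ n, U n ∧ IsClosed (H : Set G) ∧
        IsNowhereDense (H : Set G) ∧ IsGδ (H : Set G) := by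
  obtain ⟨S, hSδ, hS1, hS⟩ := exists_isGδ_one_mem_notMem_nhds_one hG
  obtain ⟨W, hWo, rfl⟩ := isGδ_iff_eq_iInter_nat.1 hSδ
  obtain ⟨U, hUo, hU1, hUinv, hUmul, hUW⟩ := exists_seq_isOpen_inv_eq_mul_subset fun n =>
    (hWo n).mem_nhds (mem_iInter.1 hS1 n)
  have hU : ∀ n, U n ∈ 𝓝 1 := fun n => (hUo n).mem_nhds (hU1 n)
  let H := Subgroup.iInterOfMulSubset U hU1 hUinv hUmul
  have hHclosed : IsClosed (H : Set G) := Subgroup.isClosed_iInterOfMulSubset hU hUinv hUmul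
  refine ⟨U, hU, hUinv, hUmul, H, rfl, hHclosed, ?_, ?_⟩
  · exact hHclosed.isNowhereDense_iff.2 <|
      Subgroup.interior_eq_empty_of_subset_notMem_nhds_one (iInter_mono hUW) hS
  · exact IsGδ.iInter_of_isOpen hUo

/-- In any Hausdorff topological group which is not a P-space there is a closed, nowhere
dense, Gδ subgroup of the form `⋂ n, U n` with the `U n` symmetric neighborhoods of `1`
satisfying `U (n+1) * U (n+1) ⊆ U n`. -/
theorem statement5 {G : Type u} [Group G] [TopologicalSpace G] [IsTopologicalGroup G]
    [T2Space G] (hG : ¬ IsPSpace G) :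
    ∃ U : ℕ → Set G, (∀ n, U n ∈ nhds (1 : G)) ∧ (∀ n, (U n)⁻¹ = U n) ∧
      (∀ n, U (n + 1) * U (n + 1) ⊆ U n) ∧
      ∃ H : Subgroup G, (H : Set G) = ⋂ n, U n ∧ IsClosed (H : Set G) ∧
        IsNowhereDense (H : Set G) ∧ IsGδ (H : Set G) :=
  statement5_general hG
end

section
/- Let G be a Hausdorff topological group whose underlying Tychonoff space is an F'-space, and let H be a countable subgroup of G. Then H, with the subspace topology, is extremally disconnected: any two disjoint open subsets of H have disjoint closures in H. -/
open Set Topology Pointwise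

universe u v w

/-! Let `s, t` be countable with `s ∩ closure t = t ∩ closure s = ∅`, enumerated as `a n`, `b n`.
Complete regularity gives continuous `f n` vanishing at `a n` and equal to `1` on `closure t`,
and `g n` vanishing at `b n` and equal to `1` on `closure s`. The staircase union over `n` of
`{f n < 1/2} ∩ ⋂ m ≤ n, {1/2 < g m}` is a cozero set containing `s`; its mirror image with `f`
and `g` swapped is a cozero set containing `t`, and the two cannot meet (compare the indices).
The F'-property now separates the closures. Disjoint open sets of a countable subspace are
separated in this sense, and closures in the subspace are traces of closures in the space. -/

variable {X : Type u}

def staircase (f g : ℕ → X → ℝ) : Set X :=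
  ⋃ n, {x | f n x < 1 / 2} ∩ ⋂ m ∈ Finset.Iic n, {x | 1 / 2 < g m x}

lemma disjoint_staircase_swap (f g : ℕ → X → ℝ) : Disjoint (staircase f g) (staircase g f) := by
  simp only [staircase, disjoint_left, mem_iUnion, mem_inter_iff, mem_iInter, Finset.mem_Iic,
    mem_ofPred_eq]
  rintro x ⟨n, hfn, hg⟩ ⟨k, hgk, hf⟩
  rcases le_total n k with h | h
  · linarith [hf n h]
  · linarith [hg k h]

lemma range_subset_staircase {f g : ℕ → X → ℝ} {a : ℕ → X} (hfa : ∀ n, f n (a n) = 0)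
    (hga : ∀ m n, g m (a n) = 1) : range a ⊆ staircase f g := by
  rintro _ ⟨n, rfl⟩
  simp only [staircase, mem_iUnion, mem_inter_iff, mem_iInter, mem_ofPred_eq, hga]
  exact ⟨n, by rw [hfa]; norm_num, fun _ _ ↦ by norm_num⟩

variable [TopologicalSpace X]

namespace IsCozeroSet

lemma univ : IsCozeroSet (univ : Set X) :=
  ⟨fun _ ↦ 1, continuous_const, by simp⟩

lemma inter_s8 {s t : Set X} (hs : IsCozeroSet s) (ht : IsCozeroSet t) : IsCozeroSet (s ∩ t) := by
  obtain ⟨f, hf, rfl⟩ := hs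
  obtain ⟨g, hg, rfl⟩ := ht
  exact ⟨f * g, hf.mul hg, by ext; simp⟩

lemma biInter_finset {ι : Type*} {s : ι → Set X} (S : Finset ι)
    (hs : ∀ i ∈ S, IsCozeroSet (s i)) : IsCozeroSet (⋂ i ∈ S, s i) := by
  classical
  induction S using Finset.induction_on with
  | empty => simpa using univ
  | insert i S _ ih =>
    rw [Finset.set_biInter_insert]
    exact (hs i (Finset.mem_insert_self i S)).inter_s8
      (ih fun j hj ↦ hs j (Finset.mem_insert_of_mem hj))

/-- The `n`-th summand `2⁻ⁿ * min |f n| 1` is bounded by `2⁻ⁿ`, so the series converges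
uniformly, and being nonnegative it vanishes exactly where every `f n` does. -/
lemma iUnion {s : ℕ → Set X} (hs : ∀ n, IsCozeroSet (s n)) : IsCozeroSet (⋃ n, s n) := by
  choose f hf hfs using hs
  set u : ℕ → X → ℝ := fun n x ↦ (1 / 2) ^ n * min |f n x| 1
  have hu_nonneg : ∀ n x, 0 ≤ u n x := fun n x ↦ by positivity
  have hu_le : ∀ n x, ‖u n x‖ ≤ (1 / 2) ^ n := fun n x ↦ by
    rw [Real.norm_of_nonneg (hu_nonneg n x)]
    exact mul_le_of_le_one_right (by positivity) (min_le_right _ _)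
  have hgeom : Summable fun n : ℕ ↦ ((1 : ℝ) / 2) ^ n :=
    summable_geometric_of_lt_one (by norm_num) (by norm_num)
  refine ⟨fun x ↦ ∑' n, u n x, continuous_tsum (fun n ↦ by fun_prop) hgeom hu_le, ?_⟩
  ext x
  have hsum : Summable fun n ↦ u n x :=
    hgeom.of_nonneg_of_le (hu_nonneg · x) fun n ↦
      (Real.norm_of_nonneg (hu_nonneg n x)) ▸ hu_le n x
  rw [mem_iUnion, mem_ofPred_eq, Ne, ← hsum.hasSum_iff, hasSum_zero_iff_of_nonneg (hu_nonneg · x)]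
  simp [u, funext_iff, hfs, show ∀ a : ℝ, min |a| 1 = 0 ↔ a = 0 by grind]

end IsCozeroSet

lemma isCozeroSet_setOf_lt {f : X → ℝ} (hf : Continuous f) (c : ℝ) :
    IsCozeroSet {x | f x < c} :=
  ⟨fun x ↦ max (c - f x) 0, by fun_prop, by ext; simp⟩

lemma isCozeroSet_setOf_gt {f : X → ℝ} (hf : Continuous f) (c : ℝ) :
    IsCozeroSet {x | c < f x} := by
  simpa using isCozeroSet_setOf_lt hf.neg (-c)

lemma isCozeroSet_staircase {f g : ℕ → X → ℝ} (hf : ∀ n, Continuous (f n))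
    (hg : ∀ n, Continuous (g n)) : IsCozeroSet (staircase f g) :=
  IsCozeroSet.iUnion fun n ↦ (isCozeroSet_setOf_lt (hf n) _).inter_s8 <|
    IsCozeroSet.biInter_finset _ fun m _ ↦ isCozeroSet_setOf_gt (hg m) _

variable [CompletelyRegularSpace X]

lemma exists_continuous_eq_zero_eqOn_one {x : X} {K : Set X} (hK : IsClosed K) (hx : x ∉ K) :
    ∃ f : X → ℝ, Continuous f ∧ f x = 0 ∧ EqOn f 1 K := by
  obtain ⟨f, hf, hfx, hfK⟩ := CompletelyRegularSpace.completely_regular x K hK hx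
  exact ⟨(↑) ∘ f, continuous_subtype_val.comp hf, by simp [hfx], fun y hy ↦ by simp [hfK hy]⟩

lemma exists_isCozeroSet_separating_range {a b : ℕ → X}
    (hab : Disjoint (range a) (closure (range b))) (hba : Disjoint (range b) (closure (range a))) :
    ∃ U V : Set X, IsCozeroSet U ∧ IsCozeroSet V ∧ Disjoint U V ∧ range a ⊆ U ∧ range b ⊆ V := by
  choose f hf hfa hfb using fun n ↦
    exists_continuous_eq_zero_eqOn_one isClosed_closure (disjoint_left.mp hab (mem_range_self n))
  choose g hg hgb hga using fun n ↦
    exists_continuous_eq_zero_eqOn_one isClosed_closure (disjoint_left.mp hba (mem_range_self n))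
  exact ⟨staircase f g, staircase g f, isCozeroSet_staircase hf hg, isCozeroSet_staircase hg hf,
    disjoint_staircase_swap f g,
    range_subset_staircase hfa fun m n ↦ hga m (subset_closure (mem_range_self n)),
    range_subset_staircase hgb fun m n ↦ hfb m (subset_closure (mem_range_self n))⟩

theorem IsFPrimeSpace.disjoint_closure_of_countable (hX : IsFPrimeSpace X) {s t : Set X}
    (hs : s.Countable) (ht : t.Countable) (hst : Disjoint s (closure t))
    (hts : Disjoint t (closure s)) : Disjoint (closure s) (closure t) := by
  rcases s.eq_empty_or_nonempty with rfl | hs₀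
  · simp
  rcases t.eq_empty_or_nonempty with rfl | ht₀
  · simp
  obtain ⟨a, rfl⟩ := hs.exists_eq_range hs₀
  obtain ⟨b, rfl⟩ := ht.exists_eq_range ht₀
  obtain ⟨U, V, hU, hV, hUV, haU, hbV⟩ := exists_isCozeroSet_separating_range hst hts
  exact (hX U V hU hV hUV).mono (closure_mono haU) (closure_mono hbV)

theorem IsFPrimeSpace.disjoint_closure_of_isOpen_of_countable (hX : IsFPrimeSpace X)
    {S : Set X} (hS : S.Countable) {s t : Set S} (hs : IsOpen s) (ht : IsOpen t)
    (hst : Disjoint s t) : Disjoint (closure s) (closure t) := by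
  have hcl (u : Set S) : closure u = Subtype.val ⁻¹' closure (Subtype.val '' u) :=
    IsEmbedding.subtypeVal.closure_eq_preimage_closure_image u
  have hcount (u : Set S) : (Subtype.val '' u).Countable :=
    hS.mono (Subtype.coe_image_subset S u)
  have separated {u v : Set S} (hu : IsOpen u) (huv : Disjoint u v) :
      Disjoint (Subtype.val '' u) (closure (Subtype.val '' v)) :=
    disjoint_image_left.mpr (hcl v ▸ huv.closure_right hu)
  rw [hcl s, hcl t]
  exact (hX.disjoint_closure_of_countable (hcount s) (hcount t) (separated hs hst)
    (separated ht hst.symm)).preimage _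

theorem statement8_general {G : Type u} [Group G] [TopologicalSpace G]
    [CompletelyRegularSpace G] (hF' : IsFPrimeSpace G)
    (H : Subgroup G) (hH : (H : Set G).Countable) :
    ∀ s t : Set H, IsOpen s → IsOpen t → Disjoint s t →
      Disjoint (closure s) (closure t) :=
  fun _ _ hs ht hst ↦ hF'.disjoint_closure_of_isOpen_of_countable hH hs ht hst

/-- Every countable subgroup (with the subspace topology) of a Hausdorff topological group
whose underlying Tychonoff space is an F'-space is extremally disconnected: any two disjoint
open subsets of it have disjoint closures. -/
theorem statement8 {G : Type u} [Group G] [TopologicalSpace G] [IsTopologicalGroup G]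
    [T2Space G] [CompletelyRegularSpace G] (hF' : IsFPrimeSpace G)
    (H : Subgroup G) (hH : (H : Set G).Countable) :
    ∀ s t : Set H, IsOpen s → IsOpen t → Disjoint s t →
      Disjoint (closure s) (closure t) :=
  statement8_general hF' H hH
end

section
/- Let X be a Tychonoff space containing clopen subsets U_n, n ∈ ω, such that U_{n+1} ⊆ U_n for all n ∈ ω and the intersection C = ⋂_{n∈ω} U_n is nonempty and not open in X. Then there exist a countable nondiscrete Tychonoff space Y having exactly one non-isolated point and an ℝ-quotient map p : X → Y. -/
open Set Topology Pointwise

universe u v w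

/-- An indicator-type function with values in any space is continuous when the set is clopen. -/
lemma aux_clopen_if {Z W : Type*} [TopologicalSpace Z] [TopologicalSpace W] {s : Set Z}
    (hs : IsClopen s) (a b : W) {inst : ∀ z, Decidable (z ∈ s)} :
    Continuous fun z => @ite _ (z ∈ s) (inst z) a b := by
  apply Continuous.if _ continuous_const continuous_const
  intro z hz
  rw [show {x | x ∈ s} = s from rfl, isClopen_iff_frontier_eq_empty.mp hs] at hz
  exact hz.elim

/-- If a Tychonoff space `X` has a decreasing sequence of clopen sets whose intersection is
nonempty and not open, then `X` admits an ℝ-quotient map onto a countable nondiscrete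
Tychonoff space with exactly one non-isolated point. -/
theorem statement9 {X : Type u} [TopologicalSpace X] [CompletelyRegularSpace X] [T2Space X]
    (U : ℕ → Set X) (hclopen : ∀ n, IsClopen (U n)) (hmono : ∀ n, U (n + 1) ⊆ U n)
    (hne : (⋂ n, U n).Nonempty) (hnopen : ¬ IsOpen (⋂ n, U n)) :
    ∃ (Y : Type u) (tY : TopologicalSpace Y),
      @CompletelyRegularSpace Y tY ∧ @T2Space Y tY ∧ Countable Y ∧
      ¬ @DiscreteTopology Y tY ∧ (∃! y : Y, ¬ @IsOpen Y tY ({y} : Set Y)) ∧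
      ∃ p : X → Y, @IsRQuotientMap X Y _ tY p := by
  classical
  set C : Set X := ⋂ n, U n with hC
  have hanti : Antitone U := antitone_nat_of_succ_le hmono
  set Sp : ℕ → Prop := fun n => U (n + 1) ≠ U n with hSp
  have hSinf : (setOf Sp).Infinite := by
    by_contra hfin
    rw [Set.not_infinite] at hfin
    obtain ⟨N, hN⟩ := hfin.bddAbove
    have heq : ∀ m, U (N + 1 + m) = U (N + 1) := by
      intro m
      induction m with
      | zero => rfl
      | succ m ih =>
        have hnot : ¬ Sp (N + 1 + m) := fun hmem => by
          have := hN hmem; omega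
        have h1 : U (N + 1 + (m + 1)) = U (N + 1 + m) := not_ne_iff.mp hnot
        rw [h1, ih]
    have hCeq : C = U (N + 1) := by
      apply Set.Subset.antisymm (Set.iInter_subset U (N + 1))
      apply Set.subset_iInter
      intro n
      rcases le_or_gt n (N + 1) with h | h
      · exact hanti h
      · have h2 : U n = U (N + 1) := by
          have := heq (n - (N + 1))
          rwa [show N + 1 + (n - (N + 1)) = n by omega] at this
        rw [h2]
    exact hnopen (hCeq ▸ (hclopen (N + 1)).2)
  set e : ℕ → ℕ := Nat.nth Sp with he
  have hemono : StrictMono e := Nat.nth_strictMono hSinf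
  set V : ℕ → Set X := fun k => U (e k) with hV
  have hVanti : Antitone V := hanti.comp_monotone hemono.monotone
  have hVclopen : ∀ k, IsClopen (V k) := fun k => hclopen (e k)
  have hCV : ∀ k, C ⊆ V k := fun k => Set.iInter_subset U (e k)
  have hVstrict : ∀ k, ∃ x, x ∈ V k ∧ x ∉ V (k + 1) := by
    intro k
    have h1 : U (e k + 1) ≠ U (e k) := Nat.nth_mem_of_infinite hSinf k
    have h2 : U (e k + 1) ⊂ U (e k) := (hmono (e k)).ssubset_of_ne h1
    obtain ⟨x, hx1, hx2⟩ := Set.exists_of_ssubset h2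
    refine ⟨x, hx1, fun hx3 => hx2 ?_⟩
    exact hanti (Nat.succ_le_of_lt (hemono (Nat.lt_succ_self k))) hx3
  have hnotC : ∀ x, x ∉ C → ∃ k, x ∉ V k := by
    intro x hx
    rw [hC, Set.mem_iInter] at hx
    push_neg at hx
    obtain ⟨n, hn⟩ := hx
    exact ⟨n, fun hxn => hn (hanti (hemono.le_apply) hxn)⟩
  set p : X → ULift.{u} (Option ℕ) := fun x =>
    if hx : x ∈ C then ⟨none⟩ else ⟨some (Nat.find (hnotC x hx) - 1)⟩ with hp
  have pnone : ∀ x, p x = ⟨none⟩ ↔ x ∈ C := by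
    intro x
    simp only [hp]
    split_ifs with hx <;> simp [hx]
  have pval : ∀ x k, p x = ⟨some k⟩ ↔ (x ∉ V (k + 1) ∧ (k = 0 ∨ x ∈ V k)) := by
    intro x k
    by_cases hx : x ∈ C
    · simp only [hp, dif_pos hx]
      simp [hCV (k + 1) hx]
    · have key : p x = ⟨some k⟩ ↔ Nat.find (hnotC x hx) - 1 = k := by
        simp only [hp, dif_neg hx, ULift.ext_iff, Option.some.injEq]
      rw [key]
      have hspec : x ∉ V (Nat.find (hnotC x hx)) := Nat.find_spec (hnotC x hx)
      constructor
      · intro h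
        constructor
        · intro hmem
          have hlt : k + 1 < Nat.find (hnotC x hx) :=
            (Nat.lt_find_iff (hnotC x hx) (k + 1)).mpr
              (fun j hj hjV => hjV (hVanti hj hmem))
          omega
        · rcases Nat.eq_zero_or_pos k with h0 | h0
          · exact Or.inl h0
          · refine Or.inr ?_
            by_contra hmemV
            have hle : Nat.find (hnotC x hx) ≤ k := Nat.find_le hmemV
            omega
      · rintro ⟨h1, h2⟩
        have hub : Nat.find (hnotC x hx) ≤ k + 1 := Nat.find_le h1
        rcases h2 with rfl | h2
        · omega
        · have hlt : k < Nat.find (hnotC x hx) :=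
            (Nat.lt_find_iff (hnotC x hx) k).mpr
              (fun j hj hjV => hjV (hVanti hj h2))
          omega
  have hpre_some : ∀ k, p ⁻¹' {⟨some k⟩} =
      (V (k + 1))ᶜ ∩ (if k = 0 then Set.univ else V k) := by
    intro k
    ext x
    simp only [Set.mem_preimage, Set.mem_singleton_iff, pval, Set.mem_inter_iff,
      Set.mem_compl_iff]
    split_ifs with h0 <;> simp [h0]
  have hBlock : ∀ k, IsClopen (p ⁻¹' {⟨some k⟩}) := by
    intro k
    rw [hpre_some]
    refine IsClopen.inter (hVclopen (k + 1)).compl ?_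
    split_ifs
    · exact isClopen_univ
    · exact hVclopen k
  have hpre_none : p ⁻¹' {⟨none⟩} = C := by
    ext x
    simp [Set.mem_preimage, pnone x]
  letI tY : TopologicalSpace (ULift.{u} (Option ℕ)) := TopologicalSpace.coinduced p ‹_›
  have hopen_iff : ∀ S : Set (ULift.{u} (Option ℕ)), IsOpen S ↔ IsOpen (p ⁻¹' S) :=
    fun S => isOpen_coinduced
  have hopen_not_none : ∀ S : Set (ULift.{u} (Option ℕ)),
      (⟨none⟩ : ULift.{u} (Option ℕ)) ∉ S → IsOpen S := by
    intro S hS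
    rw [hopen_iff]
    have hSU : p ⁻¹' S = ⋃ y ∈ S, p ⁻¹' {y} := by
      rw [← Set.preimage_iUnion₂]
      simp
    rw [hSU]
    apply isOpen_biUnion
    rintro ⟨o⟩ hy
    cases o with
    | none => exact absurd hy hS
    | some k => exact (hBlock k).2
  have hsome_open : ∀ k, IsOpen ({⟨some k⟩} : Set (ULift.{u} (Option ℕ))) :=
    fun k => (hopen_iff _).mpr (hBlock k).2
  have hsome_closed : ∀ k, IsClosed ({⟨some k⟩} : Set (ULift.{u} (Option ℕ))) := by
    intro k
    rw [← isOpen_compl_iff, hopen_iff, Set.preimage_compl]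
    exact (hBlock k).1.isOpen_compl
  have hnone_not_open : ¬ IsOpen ({⟨none⟩} : Set (ULift.{u} (Option ℕ))) := by
    rw [hopen_iff, hpre_none]
    exact hnopen
  have hclosed_iff : ∀ S : Set (ULift.{u} (Option ℕ)), IsClosed S ↔ IsClosed (p ⁻¹' S) := by
    intro S
    rw [← isOpen_compl_iff, ← isOpen_compl_iff, hopen_iff, Set.preimage_compl]
  have hsurj : Function.Surjective p := by
    rintro ⟨o⟩
    cases o with
    | none =>
      obtain ⟨c, hc⟩ := hne
      exact ⟨c, (pnone c).mpr hc⟩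
    | some k =>
      obtain ⟨x, hx1, hx2⟩ := hVstrict k
      exact ⟨x, (pval x k).mpr ⟨hx2, Or.inr hx1⟩⟩
  refine ⟨ULift.{u} (Option ℕ), tY, ?_, ?_, inferInstance, ?_, ?_, p, ?_⟩
  · -- CompletelyRegularSpace
    constructor
    rintro ⟨o⟩ K hK hxK
    cases o with
    | some k =>
      refine ⟨fun y => if y ∈ ({⟨some k⟩} : Set (ULift.{u} (Option ℕ))) then 0 else 1,
        ?_, by simp, ?_⟩
      · rw [continuous_coinduced_dom]
        simp only [Function.comp_def]
        exact aux_clopen_if (hBlock k) (0 : unitInterval) 1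
      · intro y hy
        have hyne : y ∉ ({⟨some k⟩} : Set (ULift.{u} (Option ℕ))) :=
          fun h => hxK (h ▸ hy)
        simp [hyne]
    | none =>
      refine ⟨fun y => if y ∈ K then 1 else 0, ?_, by simp [hxK], ?_⟩
      · rw [continuous_coinduced_dom]
        have hKc : IsClopen (p ⁻¹' K) :=
          ⟨(hclosed_iff K).mp hK, (hopen_iff K).mp (hopen_not_none K hxK)⟩
        simp only [Function.comp_def]
        exact aux_clopen_if hKc (1 : unitInterval) 0
      · intro y hy
        simp [hy]
  · -- T2
    constructor
    rintro ⟨o₁⟩ ⟨o₂⟩ hne12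
    cases o₁ with
    | some k =>
      exact ⟨{⟨some k⟩}, {⟨some k⟩}ᶜ, hsome_open k, (hsome_closed k).isOpen_compl,
        rfl, fun h => hne12 h.symm, disjoint_compl_right⟩
    | none =>
      cases o₂ with
      | none => exact absurd rfl hne12
      | some k =>
        exact ⟨{⟨some k⟩}ᶜ, {⟨some k⟩}, (hsome_closed k).isOpen_compl, hsome_open k,
          hne12, rfl, disjoint_compl_left⟩
  · -- not discrete
    intro h
    exact hnone_not_open (isOpen_discrete _)
  · -- unique non-isolated point
    refine ⟨⟨none⟩, hnone_not_open, ?_⟩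
    rintro ⟨o⟩ hy
    cases o with
    | none => rfl
    | some k => exact absurd (hsome_open k) hy
  · exact ⟨continuous_coinduced_rng, hsurj, fun φ hφ => continuous_coinduced_dom.mpr hφ⟩
end

section
/- Let X be a Tychonoff space and let x₀ and y₀ be non-P-points of X. Then there exist a Tychonoff space Y whose underlying set is a subset of ℝ and whose topology is finer than the topology induced by the Euclidean metric of ℝ, and an ℝ-quotient map f : X → Y such that f(x₀) and f(y₀) are non-P-points of Y; moreover, if x₀ ≠ y₀, then f can be chosen so that f(x₀) < f(y₀). -/
open Set Topology Pointwise

universe u v w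

/-- Gδ is preserved when passing to a finer topology. -/
lemma isGδ_of_le {α : Type*} {t t' : TopologicalSpace α} (h : t ≤ t') {s : Set α}
    (hs : @IsGδ α t' s) : @IsGδ α t s := by
  obtain ⟨T, hT, hc, rfl⟩ := hs
  exact ⟨T, fun u hu => (hT u hu).mono h, hc, rfl⟩

/-- The initial topology from a family of real-valued maps is completely regular. -/
lemma cr_iInf_real {Y : Type*} {ι : Type*} (φ : ι → Y → ℝ) :
    @CompletelyRegularSpace Y (⨅ i, TopologicalSpace.induced (φ i)
      (inferInstance : TopologicalSpace ℝ)) := by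
  classical
  letI t : TopologicalSpace Y := ⨅ i, TopologicalSpace.induced (φ i)
      (inferInstance : TopologicalSpace ℝ)
  rw [completelyRegularSpace_iff]
  intro x K hK hx
  have hcont : ∀ i, Continuous (φ i) := fun i =>
    continuous_iff_le_induced.2 (iInf_le _ i)
  have hUK : Kᶜ ∈ 𝓝 x := hK.isOpen_compl.mem_nhds hx
  have hnhds : (𝓝 x : Filter Y) = ⨅ i, Filter.comap (φ i) (𝓝 (φ i x)) := by
    rw [_root_.nhds_iInf]
    simp only [nhds_induced]
  rw [hnhds] at hUK
  obtain ⟨I, hIfin, V, hV, hVK⟩ := Filter.mem_iInf.1 hUK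
  haveI := hIfin.fintype
  choose W hW hWV using fun i : I => Filter.mem_comap.1 (hV i)
  choose ε hε hball using fun i : I => Metric.mem_nhds_iff.1 (hW i)
  set g : Y → ℝ := fun y => ∑ i : I, min 1 (dist (φ i y) (φ i x) / ε i) with hg
  have hterm_nonneg : ∀ (i : I) (y : Y), 0 ≤ min 1 (dist (φ (i : ι) y) (φ (i : ι) x) / ε i) :=
    fun i y => le_min zero_le_one (div_nonneg dist_nonneg (hε i).le)
  have hg0 : ∀ y, 0 ≤ g y := fun y => Finset.sum_nonneg fun i _ => hterm_nonneg i y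
  have hgc : Continuous g := by
    apply continuous_finset_sum
    intro i _
    exact continuous_const.min (((hcont i).dist continuous_const).div_const _)
  have hgx : g x = 0 := by
    simp [hg, dist_self]
  have hgK : ∀ y ∈ K, 1 ≤ g y := by
    intro y hy
    have : y ∉ (⋂ i, V i) := by
      rw [← hVK]; simpa using hy
    have : ∃ i : I, y ∉ V i := by
      by_contra hcon
      push_neg at hcon
      exact this (mem_iInter.2 hcon)
    obtain ⟨i, hi⟩ := this
    have hyb : φ (i : ι) y ∉ Metric.ball (φ (i : ι) x) (ε i) := fun hb =>
      hi (hWV i (mem_preimage.2 (hball i hb)))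
    have hd : ε i ≤ dist (φ (i : ι) y) (φ (i : ι) x) := by
      simpa [Metric.mem_ball, not_lt] using hyb
    have h1 : (1 : ℝ) ≤ dist (φ (i : ι) y) (φ (i : ι) x) / ε i :=
      (one_le_div (hε i)).2 hd
    calc (1 : ℝ) = min 1 (dist (φ (i : ι) y) (φ (i : ι) x) / ε i) := (min_eq_left h1).symm
      _ ≤ g y := Finset.single_le_sum (fun j _ => hterm_nonneg j y) (Finset.mem_univ i)
  refine ⟨fun y => ⟨min 1 (g y), le_min zero_le_one (hg0 y), min_le_left _ _⟩,
    (continuous_const.min hgc).subtype_mk _, ?_, ?_⟩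
  · exact Subtype.ext (by simp [hgx])
  · intro y hy
    exact Subtype.ext (by simpa using min_eq_left (hgK y hy))


/-- From a non-P-point, extract a continuous `[0,1]`-valued function vanishing at the point
whose zero set is not a neighborhood. -/
lemma nonP_fun {X : Type*} [TopologicalSpace X] [CompletelyRegularSpace X] {x₀ : X}
    (hx : IsNonPPoint x₀) :
    ∃ g : X → ℝ, Continuous g ∧ (∀ x, 0 ≤ g x ∧ g x ≤ 1) ∧ g x₀ = 0 ∧
      {x | g x = 0} ∉ 𝓝 x₀ := by
  obtain ⟨s, ⟨T, hTo, hTc, rfl⟩, hxs, hs⟩ := hx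
  have hTne : T.Nonempty := by
    rcases T.eq_empty_or_nonempty with h | h
    · exact absurd (by simp [h] : ⋂₀ T ∈ 𝓝 x₀) hs
    · exact h
  obtain ⟨U, rfl⟩ := hTc.exists_eq_range hTne
  have hUo : ∀ n, IsOpen (U n) := fun n => hTo _ (mem_range_self n)
  have hxU : ∀ n, x₀ ∈ U n := fun n => hxs _ (mem_range_self n)
  have hsel : ∀ n : ℕ, ∃ f : X → unitInterval, Continuous f ∧ f x₀ = 0 ∧
      EqOn f 1 (U n)ᶜ := fun n =>
    CompletelyRegularSpace.completely_regular x₀ (U n)ᶜ (hUo n).isClosed_compl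
      (by simpa using hxU n)
  choose G hGc hGx hGU using hsel
  set g : X → ℝ := fun x => ∑' n, (1 / 2 / 2 ^ n) * (G n x : ℝ) with hgdef
  have hcoef : ∀ n : ℕ, (0:ℝ) < 1 / 2 / 2 ^ n := fun n => by positivity
  have hbound : ∀ (n : ℕ) (x : X), ‖(1 / 2 / 2 ^ n) * (G n x : ℝ)‖ ≤ 1 / 2 / 2 ^ n := by
    intro n x
    rw [Real.norm_eq_abs, abs_mul, abs_of_pos (hcoef n),
      abs_of_nonneg (G n x).2.1]
    nlinarith [(G n x).2.1, (G n x).2.2, hcoef n]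
  have hsum : Summable (fun n : ℕ => (1:ℝ) / 2 / 2 ^ n) := summable_geometric_two' 1
  have hsummx : ∀ x, Summable (fun n : ℕ => (1 / 2 / 2 ^ n) * (G n x : ℝ)) := by
    intro x
    refine Summable.of_nonneg_of_le (fun n => ?_) (fun n => ?_) hsum
    · exact mul_nonneg (hcoef n).le (G n x).2.1
    · nlinarith [(G n x).2.1, (G n x).2.2, hcoef n]
  have hgc : Continuous g := by
    refine continuous_tsum (fun n => ?_) hsum hbound
    exact continuous_const.mul (continuous_subtype_val.comp (hGc n))
  have hgnn : ∀ x, 0 ≤ g x := fun x =>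
    tsum_nonneg fun n => mul_nonneg (hcoef n).le (G n x).2.1
  have hgle : ∀ x, g x ≤ 1 := by
    intro x
    calc g x ≤ ∑' n, (1:ℝ) / 2 / 2 ^ n := by
          refine Summable.tsum_le_tsum (fun n => ?_) (hsummx x) hsum
          nlinarith [(G n x).2.1, (G n x).2.2, hcoef n]
      _ = 1 := tsum_geometric_two' 1
  have hgx0 : g x₀ = 0 := by
    have : ∀ n : ℕ, (1 / 2 / 2 ^ n) * (G n x₀ : ℝ) = 0 := by
      intro n; rw [hGx n]; simp
    rw [hgdef]
    simp only [this]
    exact tsum_zero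
  have hzero : {x | g x = 0} ⊆ ⋂₀ range U := by
    intro x hx
    have hterm : ∀ n, (1 / 2 / 2 ^ n) * (G n x : ℝ) = 0 := by
      intro n
      have h1 : (1 / 2 / 2 ^ n) * (G n x : ℝ) ≤ 0 := by
        rw [← hx]
        exact Summable.le_tsum (hsummx x) n fun j _ => mul_nonneg (hcoef j).le (G j x).2.1
      exact le_antisymm h1 (mul_nonneg (hcoef n).le (G n x).2.1)
    rintro s ⟨n, rfl⟩
    by_contra hxn
    have h1 : (G n x : ℝ) = 1 := by
      have := hGU n hxn
      rw [this]; rfl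
    have := hterm n
    rw [h1, mul_one] at this
    exact absurd this (hcoef n).ne'
  refine ⟨g, hgc, fun x => ⟨hgnn x, hgle x⟩, hgx0, fun hmem => hs ?_⟩
  exact Filter.mem_of_superset hmem hzero

/-- Key construction: from a continuous real function whose fibers at `x₀, y₀` are not
neighborhoods, build the desired ℝ-quotient onto its range with the real-initial topology. -/
lemma key_construction {X : Type u} [TopologicalSpace X] (x₀ y₀ : X) (f : X → ℝ)
    (hf : Continuous f)
    (h1 : {x | f x = f x₀} ∉ nhds x₀) (h2 : {x | f x = f y₀} ∉ nhds y₀)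
    (h3 : x₀ ≠ y₀ → f x₀ < f y₀) :
    ∃ (S : Set ℝ) (tY : TopologicalSpace S),
      tY ≤ (inferInstance : TopologicalSpace S) ∧
      @CompletelyRegularSpace S tY ∧ @T2Space S tY ∧
      ∃ F : X → S, @IsRQuotientMap X S _ tY F ∧
        @IsNonPPoint S tY (F x₀) ∧ @IsNonPPoint S tY (F y₀) ∧
        (x₀ ≠ y₀ → ((F x₀ : ℝ) < (F y₀ : ℝ))) := by
  classical
  set S : Set ℝ := Set.range f with hS
  set F : X → S := fun x => ⟨f x, Set.mem_range_self x⟩ with hF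
  set Φ : Type _ := {φ : S → ℝ // Continuous (φ ∘ F)} with hΦ
  -- facts about the standard (subtype) topology, recorded before `tY` enters the context
  have ht2R : T2Space S := inferInstance
  have hsing : ∀ z : S, IsGδ ({z} : Set S) := fun z => IsGδ.singleton z
  set tY : TopologicalSpace S :=
    ⨅ φ : Φ, TopologicalSpace.induced φ.1 (inferInstance : TopologicalSpace ℝ) with htY
  have hval : Continuous ((Subtype.val : S → ℝ) ∘ F) := hf
  have hle : tY ≤ (instTopologicalSpaceSubtype : TopologicalSpace S) := by
    rw [htY]
    exact iInf_le (fun φ : Φ => TopologicalSpace.induced φ.1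
      (inferInstance : TopologicalSpace ℝ)) ⟨Subtype.val, hval⟩
  have hcr : @CompletelyRegularSpace S tY := cr_iInf_real (fun φ : Φ => φ.1)
  have ht2 : @T2Space S tY := t2Space_antitone hle ht2R
  have hFc : Continuous[_, tY] F := by
    rw [htY, continuous_iInf_rng]
    intro φ
    rw [continuous_induced_rng]
    exact φ.2
  have hFsurj : Function.Surjective F := by
    rintro ⟨y, x, rfl⟩
    exact ⟨x, rfl⟩
  have hfib : ∀ z : X, F ⁻¹' {F z} = {x | f x = f z} := by
    intro z
    ext x
    simp [hF, Subtype.ext_iff]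
  have hnonP : ∀ z : X, {x | f x = f z} ∉ nhds z → @IsNonPPoint S tY (F z) := by
    intro z hz
    refine ⟨{F z}, isGδ_of_le hle (hsing (F z)), rfl, ?_⟩
    intro hmem
    have : F ⁻¹' {F z} ∈ nhds z := (hFc.continuousAt).preimage_mem_nhds hmem
    rw [hfib z] at this
    exact hz this
  refine ⟨S, tY, ?_, hcr, ht2, F, ⟨hFc, hFsurj,
    fun φ hφ => continuous_iff_le_induced.2 (iInf_le _ (⟨φ, hφ⟩ : Φ))⟩,
    hnonP x₀ h1, hnonP y₀ h2, fun hne => h3 hne⟩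
  exact le_rfl

/-- Given non-P-points `x₀, y₀` of a Tychonoff space `X`, there is a Tychonoff space `Y`
whose underlying set is a subset of ℝ, with a topology finer than the Euclidean one, and an
ℝ-quotient map `f : X → Y` such that `f x₀` and `f y₀` are non-P-points of `Y`; moreover,
if `x₀ ≠ y₀` then `f` can be chosen with `f x₀ < f y₀`. -/
theorem statement11 {X : Type u} [TopologicalSpace X] [CompletelyRegularSpace X] [T2Space X]
    (x₀ y₀ : X) (hx : IsNonPPoint x₀) (hy : IsNonPPoint y₀) :
    ∃ (S : Set ℝ) (tY : TopologicalSpace S),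
      tY ≤ (inferInstance : TopologicalSpace S) ∧
      @CompletelyRegularSpace S tY ∧ @T2Space S tY ∧
      ∃ f : X → S, @IsRQuotientMap X S _ tY f ∧
        @IsNonPPoint S tY (f x₀) ∧ @IsNonPPoint S tY (f y₀) ∧
        (x₀ ≠ y₀ → ((f x₀ : ℝ) < (f y₀ : ℝ))) := by
  classical
  obtain ⟨g, hgc, hgb, hgx0, hgz⟩ := nonP_fun hx
  by_cases hxy : x₀ = y₀
  · subst hxy
    refine key_construction x₀ x₀ g hgc ?_ ?_ (fun h => absurd rfl h)
    · rw [hgx0]; exact hgz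
    · rw [hgx0]; exact hgz
  · obtain ⟨h, hhc, hhb, hhy0, hhz⟩ := nonP_fun hy
    obtain ⟨χ', hχc', hχx', hχy'⟩ :=
      CompletelyRegularSpace.completely_regular x₀ {y₀} isClosed_singleton (by simpa using hxy)
    set χ : X → ℝ := fun x => (χ' x : ℝ) with hχdef
    have hχc : Continuous χ := continuous_subtype_val.comp hχc'
    have hχb : ∀ x, 0 ≤ χ x ∧ χ x ≤ 1 := fun x => ⟨(χ' x).2.1, (χ' x).2.2⟩
    have hχx : χ x₀ = 0 := by rw [hχdef]; simp [hχx']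
    have hχy : χ y₀ = 1 := by
      have : χ' y₀ = 1 := hχy' rfl
      rw [hχdef]; simp [this]
    set f : X → ℝ := fun x => g x * (1 - χ x) + (4 - h x) * χ x with hfdef
    have hfc : Continuous f := by
      apply Continuous.add
      · exact hgc.mul (continuous_const.sub hχc)
      · exact (continuous_const.sub hhc).mul hχc
    have hfx0 : f x₀ = 0 := by simp [hfdef, hgx0, hχx]
    have hfy0 : f y₀ = 4 := by simp [hfdef, hχy, hhy0]
    refine key_construction x₀ y₀ f hfc ?_ ?_ (fun _ => by rw [hfx0, hfy0]; norm_num)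
    · rw [hfx0]
      intro hmem
      refine hgz (Filter.mem_of_superset hmem ?_)
      intro x hx
      have hb1 := hgb x; have hb2 := hhb x; have hb3 := hχb x
      have hx' : g x * (1 - χ x) + (4 - h x) * χ x = 0 := hx
      have e1 : 0 ≤ g x * (1 - χ x) := mul_nonneg hb1.1 (by linarith [hb3.2])
      have e2 : 0 ≤ (4 - h x) * χ x := mul_nonneg (by linarith [hb2.2]) hb3.1
      have hχ0 : χ x = 0 := by
        by_contra hc
        have : 0 < (4 - h x) * χ x :=
          mul_pos (by linarith [hb2.2]) (lt_of_le_of_ne hb3.1 (Ne.symm hc))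
        linarith
      show g x = 0
      have := hx'
      rw [hχ0] at this
      simpa using this
    · rw [hfy0]
      intro hmem
      refine hhz (Filter.mem_of_superset hmem ?_)
      intro x hx
      have hb1 := hgb x; have hb2 := hhb x; have hb3 := hχb x
      have hx' : g x * (1 - χ x) + (4 - h x) * χ x = 4 := hx
      show h x = 0
      nlinarith [mul_nonneg hb2.1 hb3.1, mul_nonneg (sub_nonneg.2 hb1.2) (sub_nonneg.2 hb3.2),
        mul_nonneg hb1.1 (sub_nonneg.2 hb3.2), mul_nonneg (sub_nonneg.2 hb2.2) (sub_nonneg.2 hb3.2)]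
end

section
/- Let f : X → Y be a continuous open surjection between topological spaces. If X is an F'-space, then Y is an F'-space. -/
open Set Topology Pointwise

universe u v w

/-- The image of an F'-space under a continuous open surjection is an F'-space. -/
theorem statement19 {X : Type u} {Y : Type v} [TopologicalSpace X] [TopologicalSpace Y]
    (f : X → Y) (hc : Continuous f) (ho : IsOpenMap f) (hs : Function.Surjective f)
    (hX : IsFPrimeSpace X) : IsFPrimeSpace Y := by

  intro s t hsc htc hd
  obtain ⟨g, hg, rfl⟩ := hsc
  obtain ⟨h, hh, rfl⟩ := htc
  have h1 : IsCozeroSet (f ⁻¹' {x | g x ≠ 0}) := ⟨g ∘ f, hg.comp hc, rfl⟩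
  have h2 : IsCozeroSet (f ⁻¹' {x | h x ≠ 0}) := ⟨h ∘ f, hh.comp hc, rfl⟩
  have hd' : Disjoint (f ⁻¹' {x | g x ≠ 0}) (f ⁻¹' {x | h x ≠ 0}) :=
    Disjoint.preimage f hd
  have key := hX _ _ h1 h2 hd'
  rw [Set.disjoint_left]
  intro y hy1 hy2
  obtain ⟨x, rfl⟩ := hs y
  have hx1 : x ∈ closure (f ⁻¹' {x | g x ≠ 0}) :=
    ho.preimage_closure_subset_closure_preimage hy1
  have hx2 : x ∈ closure (f ⁻¹' {x | h x ≠ 0}) :=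
    ho.preimage_closure_subset_closure_preimage hy2
  exact Set.disjoint_left.mp key hx1 hx2
end
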